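/- If U_A is an (α_A, a, ε_A)-block encoding of matrix A and U_B is an (α_B, b, ε_B)-block encoding of matrix B, both acting on the same s-qubit space, then the linear combination of unitaries construction yields an (α_A + α_B, max(a,b)+1, ε_A + ε_B)-block encoding of A + B. -/

import Mathlib

open scoped Matrix.Norms.L2Operator

instance (a : ℕ) : NeZero (2 ^ a) := ⟨by positivity⟩

/-- `U` is an `(α, a, ε)`-block encoding of the `2^s × 2^s` matrix `A`:
`U` is unitary on the `(s + a)`-qubit space and
`‖A − α (⟨0^a| ⊗ I) U (|0^a⟩ ⊗ I)‖ ≤ ε`. -/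
def IsBlockEncoding (s a : ℕ) (α ε : ℝ)
    (U : Matrix (Fin (2 ^ a) × Fin (2 ^ s)) (Fin (2 ^ a) × Fin (2 ^ s)) ℂ)
    (A : Matrix (Fin (2 ^ s)) (Fin (2 ^ s)) ℂ) : Prop :=
  U ∈ Matrix.unitaryGroup (Fin (2 ^ a) × Fin (2 ^ s)) ℂ ∧
    ‖A - (α : ℂ) • Matrix.of (fun i j => U (0, i) (0, j))‖ ≤ ε

open Matrix
open scoped Kronecker

lemma my_unitary_reindex {n p : Type*} [Fintype n] [DecidableEq n] [Fintype p] [DecidableEq p]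
    (e : n ≃ p) {U : Matrix n n ℂ} (h : U ∈ Matrix.unitaryGroup n ℂ) :
    Matrix.reindex e e U ∈ Matrix.unitaryGroup p ℂ := by
  rw [Matrix.mem_unitaryGroup_iff] at h ⊢
  have hs : star (Matrix.reindex e e U) = Matrix.reindex e e (star U) := by
    simp [Matrix.reindex_apply, Matrix.star_eq_conjTranspose, Matrix.conjTranspose_submatrix]
  rw [hs, Matrix.reindex_apply, Matrix.reindex_apply, Matrix.submatrix_mul_equiv, h,
    Matrix.submatrix_one_equiv]

lemma my_conjTranspose_kronecker {l m n p : Type*} (A : Matrix l m ℂ) (B : Matrix n p ℂ) :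
    (A ⊗ₖ B)ᴴ = Aᴴ ⊗ₖ Bᴴ := by
  ext ⟨i, j⟩ ⟨k, l⟩
  simp [Matrix.conjTranspose_apply, Matrix.kroneckerMap_apply, star_mul']

lemma my_unitary_kronecker {n p : Type*} [Fintype n] [DecidableEq n] [Fintype p] [DecidableEq p]
    {U : Matrix n n ℂ} {V : Matrix p p ℂ} (hU : U ∈ Matrix.unitaryGroup n ℂ)
    (hV : V ∈ Matrix.unitaryGroup p ℂ) :
    U ⊗ₖ V ∈ Matrix.unitaryGroup (n × p) ℂ := by
  rw [Matrix.mem_unitaryGroup_iff] at hU hV ⊢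
  rw [Matrix.star_eq_conjTranspose, my_conjTranspose_kronecker, ← Matrix.mul_kronecker_mul,
    ← Matrix.star_eq_conjTranspose (M := U), ← Matrix.star_eq_conjTranspose (M := V), hU, hV,
    Matrix.one_kronecker_one]

lemma my_unitary_blockDiagonal {o n : Type*} [Fintype o] [DecidableEq o] [Fintype n]
    [DecidableEq n] {F : o → Matrix n n ℂ} (hF : ∀ x, F x ∈ Matrix.unitaryGroup n ℂ) :
    Matrix.blockDiagonal F ∈ Matrix.unitaryGroup (n × o) ℂ := by
  rw [Matrix.mem_unitaryGroup_iff]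
  rw [Matrix.star_eq_conjTranspose, Matrix.blockDiagonal_conjTranspose,
    ← Matrix.blockDiagonal_mul]
  rw [show (fun k => F k * (F k)ᴴ) = fun _ => (1 : Matrix n n ℂ) from funext fun k => by
    have := (Matrix.mem_unitaryGroup_iff).mp (hF k); rwa [Matrix.star_eq_conjTranspose] at this]
  exact Matrix.blockDiagonal_one

/-- Pad a block encoding unitary with extra ancilla qubits. -/
lemma my_pad (s a m : ℕ) (h : a ≤ m)
    (U : Matrix (Fin (2 ^ a) × Fin (2 ^ s)) (Fin (2 ^ a) × Fin (2 ^ s)) ℂ)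
    (hU : U ∈ Matrix.unitaryGroup (Fin (2 ^ a) × Fin (2 ^ s)) ℂ) :
    ∃ U' : Matrix (Fin (2 ^ m) × Fin (2 ^ s)) (Fin (2 ^ m) × Fin (2 ^ s)) ℂ,
      U' ∈ Matrix.unitaryGroup (Fin (2 ^ m) × Fin (2 ^ s)) ℂ ∧
      ∀ i j, U' (0, i) (0, j) = U (0, i) (0, j) := by
  have hpow : 2 ^ (m - a) * 2 ^ a = 2 ^ m := by
    rw [← pow_add, Nat.sub_add_cancel h]
  let e1 : Fin (2 ^ (m - a)) × Fin (2 ^ a) ≃ Fin (2 ^ m) :=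
    finProdFinEquiv.trans (finCongr hpow)
  let E : (Fin (2 ^ (m - a)) × (Fin (2 ^ a) × Fin (2 ^ s))) ≃ Fin (2 ^ m) × Fin (2 ^ s) :=
    (Equiv.prodAssoc _ _ _).symm.trans (Equiv.prodCongr e1 (Equiv.refl _))
  have he1 : e1 0 = 0 := by
    apply Fin.ext
    simp [e1, finProdFinEquiv]
  have hE : ∀ j : Fin (2 ^ s), E.symm (0, j) = (0, (0, j)) := by
    intro j
    rw [Equiv.symm_apply_eq]
    simp [E, Equiv.prodAssoc, he1]
    exact he1.symm
  refine ⟨Matrix.reindex E E ((1 : Matrix (Fin (2 ^ (m - a))) (Fin (2 ^ (m - a))) ℂ) ⊗ₖ U),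
    my_unitary_reindex E (my_unitary_kronecker (Submonoid.one_mem _) hU), fun i j => ?_⟩
  rw [Matrix.reindex_apply, Matrix.submatrix_apply, hE, hE]
  simp [Matrix.kroneckerMap_apply, Matrix.one_apply]

/-- **Addition of block encodings (LCU).** If `U_A` is an `(α_A, a, ε_A)`-block encoding
of `A` and `U_B` is an `(α_B, b, ε_B)`-block encoding of `B`, both acting on the same
`s`-qubit system, then the linear combination of unitaries construction yields an
`(α_A + α_B, max a b + 1, ε_A + ε_B)`-block encoding of `A + B`. -/
theorem lcu_add_block_encoding (s a b : ℕ) (αA αB εA εB : ℝ)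
    (hαA : 0 < αA) (hαB : 0 < αB) (hεA : 0 ≤ εA) (hεB : 0 ≤ εB)
    (UA : Matrix (Fin (2 ^ a) × Fin (2 ^ s)) (Fin (2 ^ a) × Fin (2 ^ s)) ℂ)
    (UB : Matrix (Fin (2 ^ b) × Fin (2 ^ s)) (Fin (2 ^ b) × Fin (2 ^ s)) ℂ)
    (A B : Matrix (Fin (2 ^ s)) (Fin (2 ^ s)) ℂ)
    (hA : IsBlockEncoding s a αA εA UA A)
    (hB : IsBlockEncoding s b αB εB UB B) :
    ∃ U : Matrix (Fin (2 ^ (max a b + 1)) × Fin (2 ^ s))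
        (Fin (2 ^ (max a b + 1)) × Fin (2 ^ s)) ℂ,
      IsBlockEncoding s (max a b + 1) (αA + αB) (εA + εB) U (A + B) := by
  classical
  obtain ⟨hUAu, hUAb⟩ := hA
  obtain ⟨hUBu, hUBb⟩ := hB
  set m := max a b with hm
  obtain ⟨UA', hUA'u, hUA'b⟩ := my_pad s a m (le_max_left a b) UA hUAu
  obtain ⟨UB', hUB'u, hUB'b⟩ := my_pad s b m (le_max_right a b) UB hUBu
  set α := αA + αB with hα
  have hαpos : 0 < α := by positivity
  set vA : ℝ := Real.sqrt (αA / α) with hvA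
  set vB : ℝ := Real.sqrt (αB / α) with hvB
  have hvA2 : (vA : ℝ) ^ 2 = αA / α := Real.sq_sqrt (by positivity)
  have hvB2 : (vB : ℝ) ^ 2 = αB / α := Real.sq_sqrt (by positivity)
  have hsq : vA ^ 2 + vB ^ 2 = 1 := by
    rw [hvA2, hvB2]; field_simp
    exact hα.symm
  have hsqC : (vA : ℂ) ^ 2 + (vB : ℂ) ^ 2 = 1 := by exact_mod_cast congrArg (Complex.ofReal) hsq
  -- the single-qubit rotation
  set V : Matrix (Fin 2) (Fin 2) ℂ := !![(vA : ℂ), -(vB : ℂ); (vB : ℂ), (vA : ℂ)] with hVdef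
  have hV : V ∈ Matrix.unitaryGroup (Fin 2) ℂ := by
    rw [Matrix.mem_unitaryGroup_iff]
    ext i j
    fin_cases i <;> fin_cases j <;>
      simp [hVdef, Matrix.mul_apply, Fin.sum_univ_two, Matrix.one_apply,
        Matrix.star_eq_conjTranspose, Matrix.conjTranspose_apply] <;>
      push_cast <;> first | linear_combination hsqC | linear_combination -hsqC | ring
  -- controlled unitary
  set F : Fin 2 → Matrix (Fin (2 ^ m) × Fin (2 ^ s)) (Fin (2 ^ m) × Fin (2 ^ s)) ℂ := fun x => if x = 0 then UA' else UB' with hF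
  have hFu : ∀ x, F x ∈ Matrix.unitaryGroup (Fin (2 ^ m) × Fin (2 ^ s)) ℂ := by
    intro x
    by_cases hx : x = 0
    · simpa [hF, hx] using hUA'u
    · simpa [hF, hx] using hUB'u
  set D : Matrix (Fin 2 × (Fin (2 ^ m) × Fin (2 ^ s))) (Fin 2 × (Fin (2 ^ m) × Fin (2 ^ s))) ℂ :=
    Matrix.reindex (Equiv.prodComm (Fin (2 ^ m) × Fin (2 ^ s)) (Fin 2)) (Equiv.prodComm (Fin (2 ^ m) × Fin (2 ^ s)) (Fin 2))
      (Matrix.blockDiagonal F) with hD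
  have hDu : D ∈ Matrix.unitaryGroup (Fin 2 × (Fin (2 ^ m) × Fin (2 ^ s))) ℂ :=
    my_unitary_reindex _ (my_unitary_blockDiagonal hFu)
  have hDapp : ∀ (x y : Fin 2) (p q : Fin (2 ^ m) × Fin (2 ^ s)), D (x, p) (y, q) =
      if x = y then F x p q else 0 := by
    intro x y p q
    simp [hD, Matrix.reindex_apply, Matrix.submatrix_apply, Matrix.blockDiagonal_apply,
      eq_comm]
  set W : Matrix (Fin 2 × (Fin (2 ^ m) × Fin (2 ^ s))) (Fin 2 × (Fin (2 ^ m) × Fin (2 ^ s))) ℂ :=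
    (V ⊗ₖ (1 : Matrix (Fin (2 ^ m) × Fin (2 ^ s)) (Fin (2 ^ m) × Fin (2 ^ s)) ℂ))ᴴ * D * (V ⊗ₖ (1 : Matrix (Fin (2 ^ m) × Fin (2 ^ s)) (Fin (2 ^ m) × Fin (2 ^ s)) ℂ)) with hW
  have hWu : W ∈ Matrix.unitaryGroup (Fin 2 × (Fin (2 ^ m) × Fin (2 ^ s))) ℂ := by
    have h1 : (V ⊗ₖ (1 : Matrix (Fin (2 ^ m) × Fin (2 ^ s)) (Fin (2 ^ m) × Fin (2 ^ s)) ℂ)) ∈ Matrix.unitaryGroup (Fin 2 × (Fin (2 ^ m) × Fin (2 ^ s))) ℂ :=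
      my_unitary_kronecker hV (Submonoid.one_mem _)
    have h2 : (V ⊗ₖ (1 : Matrix (Fin (2 ^ m) × Fin (2 ^ s)) (Fin (2 ^ m) × Fin (2 ^ s)) ℂ))ᴴ ∈ Matrix.unitaryGroup (Fin 2 × (Fin (2 ^ m) × Fin (2 ^ s))) ℂ := by
      rw [← Matrix.star_eq_conjTranspose]
      exact Unitary.star_mem h1
    exact Submonoid.mul_mem _ (Submonoid.mul_mem _ h2 hDu) h1
  have hWblock : ∀ p q : Fin (2 ^ m) × Fin (2 ^ s), W (0, p) (0, q) =
      (vA : ℂ) ^ 2 * UA' p q + (vB : ℂ) ^ 2 * UB' p q := by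
    intro p q
    rw [hW]
    simp only [Matrix.mul_apply, Fintype.sum_prod_type, Matrix.conjTranspose_apply,
      Matrix.kroneckerMap_apply, Matrix.one_apply, hDapp, star_mul']
    simp only [apply_ite, mul_ite, ite_mul, zero_mul, mul_zero, star_one, star_zero]
    simp [Finset.sum_ite_eq, Finset.sum_ite_eq', Fin.sum_univ_two, hVdef, hF,
      Fin.isValue, Complex.star_def, Complex.conj_ofReal]
    have hps : ∀ (f : Fin (2 ^ m) → Fin (2 ^ s) → ℂ) (r : Fin (2 ^ m) × Fin (2 ^ s)),
        (∑ x : Fin (2 ^ m), ∑ y : Fin (2 ^ s), if (x, y) = r then f x y else 0)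
          = f r.1 r.2 := by
      rintro f ⟨r1, r2⟩
      simp [Prod.ext_iff, ite_and, Finset.sum_ite_eq, Finset.sum_ite_eq']
    simp only [hps, Prod.mk.eta]
    ring
  -- reindex to the final shape
  have hpow2 : 2 * 2 ^ m = 2 ^ (m + 1) := by rw [pow_succ]; ring
  set eK : Fin 2 × Fin (2 ^ m) ≃ Fin (2 ^ (m + 1)) := finProdFinEquiv.trans (finCongr hpow2)
    with heK
  have heK0 : eK 0 = 0 := by apply Fin.ext; simp [heK, finProdFinEquiv]
  set E : (Fin 2 × (Fin (2 ^ m) × Fin (2 ^ s))) ≃ Fin (2 ^ (m + 1)) × Fin (2 ^ s) :=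
    (Equiv.prodAssoc _ _ _).symm.trans (Equiv.prodCongr eK (Equiv.refl _)) with hE
  have hEsymm : ∀ j : Fin (2 ^ s), E.symm (0, j) = (0, (0, j)) := by
    intro j
    rw [Equiv.symm_apply_eq]
    simp [hE, Equiv.prodAssoc, heK0]
    exact heK0.symm
  refine ⟨Matrix.reindex E E W, my_unitary_reindex E hWu, ?_⟩
  have hblock : ∀ i j : Fin (2 ^ s), (Matrix.reindex E E W) (0, i) (0, j) =
      (vA : ℂ) ^ 2 * UA (0, i) (0, j) + (vB : ℂ) ^ 2 * UB (0, i) (0, j) := by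
    intro i j
    rw [Matrix.reindex_apply, Matrix.submatrix_apply, hEsymm, hEsymm, hWblock,
      hUA'b, hUB'b]
  have hαC : (α : ℂ) ≠ 0 := by exact_mod_cast hαpos.ne'
  have hvA2C : (vA : ℂ) ^ 2 = (αA : ℂ) / (α : ℂ) := by exact_mod_cast congrArg Complex.ofReal hvA2
  have hvB2C : (vB : ℂ) ^ 2 = (αB : ℂ) / (α : ℂ) := by exact_mod_cast congrArg Complex.ofReal hvB2
  have hsplit : (A + B) - (α : ℂ) •
      Matrix.of (fun i j => (Matrix.reindex E E W) (0, i) (0, j)) =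
      (A - (αA : ℂ) • Matrix.of (fun i j => UA (0, i) (0, j))) +
      (B - (αB : ℂ) • Matrix.of (fun i j => UB (0, i) (0, j))) := by
    ext i j
    simp only [Matrix.sub_apply, Matrix.add_apply, Matrix.smul_apply, Matrix.of_apply,
      hblock i j, smul_eq_mul, hvA2C, hvB2C]
    push_cast
    field_simp
    ring
  calc ‖(A + B) - (α : ℂ) • Matrix.of (fun i j => (Matrix.reindex E E W) (0, i) (0, j))‖
      = ‖(A - (αA : ℂ) • Matrix.of (fun i j => UA (0, i) (0, j))) +
        (B - (αB : ℂ) • Matrix.of (fun i j => UB (0, i) (0, j)))‖ := by rw [hsplit]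
    _ ≤ _ + _ := norm_add_le _ _
    _ ≤ εA + εB := add_le_add hUAb hUBb
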